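/- The optimal cost function J* is the unique solution of Bellman's equation within the set of functions {J : X → [0,∞] : 0 ≤ J ≤ c·J* for some c > 0}. Moreover, if {J_k} is the sequence generated by the value iteration algorithm J_{k+1}(x) = inf_{u ∈ U(x)} E_{w~P(·|x,u)}[ g(x,u,w) + J_k(f(x,u,w)) ] starting from any J₀ in the set W* = {J : J* ≤ J ≤ c·J* for some c > 0}, then J_k(x) → J*(x) for every x ∈ X. -/

import Mathlib

open scoped ENNReal
open Filter
open scoped Classical NNReal

/-- A stochastic shortest path (SSP) problem with state space `X`, control space `U`,
countable disturbance space `W`, a cost-free absorbing termination state `t`,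
nonempty control constraint sets `Uc x ⊆ U`, disturbance distributions `P x u`,
system function `f`, and nonnegative (finite-valued) cost per stage `g`. -/
structure SSP (X U W : Type*) [Countable W] where
  t : X
  Uc : X → Set U
  Uc_nonempty : ∀ x, (Uc x).Nonempty
  P : X → U → PMF W
  f : X → U → W → X
  g : X → U → W → ℝ≥0∞
  g_lt_top : ∀ x u w, g x u w < ⊤
  f_absorb : ∀ u ∈ Uc t, ∀ w, f t u w = t
  g_zero : ∀ u ∈ Uc t, ∀ w, g t u w = 0

namespace SSP

variable {X U W : Type*} [Countable W] (S : SSP X U W)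

/-- A policy `π = (μ₀, μ₁, …)` is admissible if `μ_k(x) ∈ U(x)` for all `k, x`. -/
def IsPolicy (π : ℕ → X → U) : Prop := ∀ k x, π k x ∈ S.Uc x

/-- Distribution of the state `x_k` after `k` steps under policy `π` starting from `x₀`. -/
noncomputable def stateDist (π : ℕ → X → U) (x₀ : X) : ℕ → PMF X
  | 0 => PMF.pure x₀
  | k + 1 => (stateDist π x₀ k).bind fun x => (S.P x (π k x)).map (S.f x (π k x))

/-- Expected value `E^π_{x₀}[J(x_k)]` of a nonnegative function along the trajectory. -/
noncomputable def expect (π : ℕ → X → U) (x₀ : X) (k : ℕ) (J : X → ℝ≥0∞) : ℝ≥0∞ :=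
  ∑' x, S.stateDist π x₀ k x * J x

/-- Expected cost `E^π_{x₀}[g(x_k, μ_k(x_k), w_k)]` of the `k`-th stage. -/
noncomputable def stageCost (π : ℕ → X → U) (x₀ : X) (k : ℕ) : ℝ≥0∞ :=
  S.expect π x₀ k fun x => ∑' w, S.P x (π k x) w * S.g x (π k x) w

/-- The cost `J_π(x₀) = Σ_{k≥0} E^π_{x₀}[g(x_k, μ_k(x_k), w_k)]` of a policy. -/
noncomputable def Jcost (π : ℕ → X → U) (x₀ : X) : ℝ≥0∞ :=
  ∑' k, S.stageCost π x₀ k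

/-- `r_k(π, x₀)`: probability that `x_k ≠ t` under `π` starting from `x₀`. -/
noncomputable def r (π : ℕ → X → U) (x₀ : X) (k : ℕ) : ℝ≥0∞ :=
  S.expect π x₀ k fun x => if x = S.t then 0 else 1

/-- `Σ_{k≥0} r_k(π,x₀)`: expected number of steps to reach the destination. -/
noncomputable def N (π : ℕ → X → U) (x₀ : X) : ℝ≥0∞ := ∑' k, S.r π x₀ k

/-- A policy is proper at `x` if it is admissible, `J_π(x) < ∞` and `Σ_k r_k(π,x) < ∞`. -/
def ProperAt (π : ℕ → X → U) (x : X) : Prop :=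
  S.IsPolicy π ∧ S.Jcost π x < ⊤ ∧ S.N π x < ⊤

/-- The optimal cost function `J*`. -/
noncomputable def Jstar (x : X) : ℝ≥0∞ := ⨅ π ∈ {π | S.IsPolicy π}, S.Jcost π x

/-- The restricted optimal cost function `Ĵ` over policies proper at `x`
(infimum over the empty set is `∞`). -/
noncomputable def Jhat (x : X) : ℝ≥0∞ := ⨅ π ∈ {π | S.ProperAt π x}, S.Jcost π x

/-- The effective domain `X̂ = {x | Ĵ(x) < ∞}` of `Ĵ`. -/
def Xhat : Set X := {x | S.Jhat x < ⊤}

/-- Expected `k`-th stage cost in the `δ`-perturbed problem (stage cost `g + δ` off `t`). -/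
noncomputable def stageCostPert (δ : ℝ≥0∞) (π : ℕ → X → U) (x₀ : X) (k : ℕ) : ℝ≥0∞ :=
  S.expect π x₀ k fun x =>
    ∑' w, S.P x (π k x) w * (S.g x (π k x) w + if x = S.t then 0 else δ)

/-- The cost `J_{π,δ}` of a policy in the `δ`-perturbed problem. -/
noncomputable def Jpert (δ : ℝ≥0∞) (π : ℕ → X → U) (x₀ : X) : ℝ≥0∞ :=
  ∑' k, S.stageCostPert δ π x₀ k

/-- The optimal cost function `Ĵ_δ` of the `δ`-perturbed problem. -/
noncomputable def JhatPert (δ : ℝ≥0∞) (x : X) : ℝ≥0∞ :=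
  ⨅ π ∈ {π | S.IsPolicy π}, S.Jpert δ π x

/-- `Q J x u = E_{w∼P(·|x,u)}[g(x,u,w) + J(f(x,u,w))]`. -/
noncomputable def Q (J : X → ℝ≥0∞) (x : X) (u : U) : ℝ≥0∞ :=
  ∑' w, S.P x u w * (S.g x u w + J (S.f x u w))

/-- The Bellman operator `(TJ)(x) = inf_{u ∈ U(x)} E[g(x,u,w) + J(f(x,u,w))]`. -/
noncomputable def bellman (J : X → ℝ≥0∞) (x : X) : ℝ≥0∞ := ⨅ u ∈ S.Uc x, S.Q J x u

/-- The tail policy `π_k = (μ_k, μ_{k+1}, …)`. -/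
def tail (π : ℕ → X → U) (k : ℕ) : ℕ → X → U := fun m => π (k + m)

/-- The set `Ŵ` of functions `J` with `J(t) = 0`, `Ĵ ≤ J`, and
`E^π_{x₀}[J(x_k)] → 0` for every pair `(π, x₀)` with `π` proper at `x₀`. -/
def What : Set (X → ℝ≥0∞) :=
  {J | J S.t = 0 ∧ S.Jhat ≤ J ∧
    ∀ π x₀, S.ProperAt π x₀ → Tendsto (fun k => S.expect π x₀ k J) atTop (nhds 0)}

/-- The set `B` of functions `J` with `J(t) = 0` that are bounded over `X̂`. -/
def Bset : Set (X → ℝ≥0∞) :=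
  {J | J S.t = 0 ∧ (⨆ x ∈ S.Xhat, J x) < ⊤}

/-- A policy is uniformly proper if it is admissible and the expected number of steps
to reach the destination is uniformly bounded over `X̂`. -/
def UniformlyProper (π : ℕ → X → U) : Prop :=
  S.IsPolicy π ∧ (⨆ x ∈ S.Xhat, S.N π x) < ⊤

/-- The cost per stage `g` is (uniformly) bounded over `X × U × W`. -/
def BoundedCost : Prop := ∃ b : ℝ≥0∞, b < ⊤ ∧ ∀ x u w, S.g x u w ≤ b

end SSP

/-!
`J*` is the least superfixed point of the Bellman operator `T`: if `TJ ≤ J`, the policy that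
at stage `k` picks a control `δ k`-optimal for `J`, with `∑ δ k < ε`, costs at most `J + ε`.
Splitting off the first stage of any policy and bounding its tail cost below by `J*` gives
`TJ* ≤ J*`; by monotonicity `TJ*` is then superfixed too, so `J* ≤ TJ*`.

For value iteration, `J* ≤ J_n` by monotonicity. Comparing `T` at each stage with the control
of a policy `π`, `J_n(x)` is at most the `n`-stage cost of `π` plus
`E^π_x[J_0(x_n)] ≤ c E^π_x[J*(x_n)]`, which is bounded by the tail `∑_{m ≥ n}` of the series
`J_π(x)` and so vanishes when `J_π(x) < ∞`. Hence `limsup J_n(x) ≤ J_π(x)` for every policy.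
A fixed point `J ≤ c J*` is a constant value iteration sequence, which gives uniqueness.
-/

section Telescoping

variable {α : Type*} [AddCommMonoid α] [Preorder α] [IsOrderedAddMonoid α]

theorem le_sum_range_add_of_le_add {a c : ℕ → α} {n : ℕ} (h : ∀ k < n, a k ≤ c k + a (k + 1)) :
    a 0 ≤ ∑ k ∈ Finset.range n, c k + a n := by
  induction n with
  | zero => simp
  | succ n ih =>
    calc a 0 ≤ ∑ k ∈ Finset.range n, c k + a n := ih fun k hk => h k (by omega)
      _ ≤ ∑ k ∈ Finset.range n, c k + (c n + a (n + 1)) := by gcongr; exact h n (by omega)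
      _ = ∑ k ∈ Finset.range (n + 1), c k + a (n + 1) := by
        rw [Finset.sum_range_succ, add_assoc]

theorem sum_range_add_le_add_sum_of_add_le {u a d : ℕ → α}
    (h : ∀ k, u k + a (k + 1) ≤ a k + d k) (n : ℕ) :
    ∑ k ∈ Finset.range n, u k + a n ≤ a 0 + ∑ k ∈ Finset.range n, d k := by
  induction n with
  | zero => simp
  | succ n ih =>
    calc ∑ k ∈ Finset.range (n + 1), u k + a (n + 1)
        = ∑ k ∈ Finset.range n, u k + (u n + a (n + 1)) := by
          rw [Finset.sum_range_succ, add_assoc]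
      _ ≤ ∑ k ∈ Finset.range n, u k + (a n + d n) := add_le_add le_rfl (h n)
      _ ≤ a 0 + ∑ k ∈ Finset.range n, d k + d n := by rw [← add_assoc]; gcongr
      _ = a 0 + ∑ k ∈ Finset.range (n + 1), d k := by rw [Finset.sum_range_succ, add_assoc]

end Telescoping

namespace PMF

variable {α β : Type*}

theorem tsum_pure_mul (a : α) (G : α → ℝ≥0∞) : ∑' x, pure a x * G x = G a := by
  simp only [pure_apply, ite_mul, one_mul, zero_mul, tsum_ite_eq]

theorem tsum_bind_mul (p : PMF α) (q : α → PMF β) (G : β → ℝ≥0∞) :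
    ∑' y, p.bind q y * G y = ∑' x, p x * ∑' y, q x y * G y := by
  simp only [bind_apply, ← ENNReal.tsum_mul_right, ← ENNReal.tsum_mul_left, mul_assoc]
  exact ENNReal.tsum_comm

theorem tsum_map_mul (p : PMF α) (φ : α → β) (G : β → ℝ≥0∞) :
    ∑' y, p.map φ y * G y = ∑' x, p x * G (φ x) := by
  rw [← bind_pure_comp, tsum_bind_mul]
  simp only [Function.comp_apply, tsum_pure_mul]

end PMF

namespace SSP

variable {X U W : Type*} [Countable W] (S : SSP X U W)

theorem IsPolicy.tail {S : SSP X U W} {π : ℕ → X → U} (hπ : S.IsPolicy π) (n : ℕ) :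
    S.IsPolicy (tail π n) :=
  fun m => hπ (n + m)

theorem stateDist_add (π : ℕ → X → U) (x : X) (n m : ℕ) :
    S.stateDist π x (n + m) = (S.stateDist π x n).bind fun z => S.stateDist (tail π n) z m := by
  induction m with
  | zero => exact (PMF.bind_pure _).symm
  | succ m ih => rw [← add_assoc, stateDist, ih, PMF.bind_bind]; rfl

section Expectation

variable (π : ℕ → X → U) (x : X)

theorem expect_zero (F : X → ℝ≥0∞) : S.expect π x 0 F = F x :=
  PMF.tsum_pure_mul x F

theorem expect_succ (k : ℕ) (F : X → ℝ≥0∞) :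
    S.expect π x (k + 1) F
      = S.expect π x k fun z => ∑' w, S.P z (π k z) w * F (S.f z (π k z) w) := by
  simp only [expect, stateDist, PMF.tsum_bind_mul, PMF.tsum_map_mul]

theorem expect_add_steps (n m : ℕ) (F : X → ℝ≥0∞) :
    S.expect π x (n + m) F = S.expect π x n fun z => S.expect (tail π n) z m F := by
  simp only [expect, stateDist_add, PMF.tsum_bind_mul]

theorem expect_mono (k : ℕ) {F G : X → ℝ≥0∞} (h : F ≤ G) : S.expect π x k F ≤ S.expect π x k G :=
  ENNReal.tsum_le_tsum fun z => mul_le_mul_right (h z) _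

theorem expect_add (k : ℕ) (F G : X → ℝ≥0∞) :
    S.expect π x k (F + G) = S.expect π x k F + S.expect π x k G := by
  simp only [expect, Pi.add_apply, mul_add, ENNReal.tsum_add]

theorem expect_const (k : ℕ) (c : ℝ≥0∞) : S.expect π x k (fun _ => c) = c := by
  rw [expect, ENNReal.tsum_mul_right, PMF.tsum_coe, one_mul]

theorem expect_const_mul (k : ℕ) (c : ℝ≥0∞) (F : X → ℝ≥0∞) :
    S.expect π x k (c • F) = c * S.expect π x k F := by
  simp only [expect, Pi.smul_apply, smul_eq_mul, mul_left_comm, ENNReal.tsum_mul_left]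

theorem expect_tsum (k : ℕ) (F : ℕ → X → ℝ≥0∞) :
    S.expect π x k (fun z => ∑' m, F m z) = ∑' m, S.expect π x k (F m) := by
  simp only [expect, ← ENNReal.tsum_mul_left]
  exact ENNReal.tsum_comm

theorem stageCost_add (n m : ℕ) :
    S.stageCost π x (n + m) = S.expect π x n fun z => S.stageCost (tail π n) z m :=
  S.expect_add_steps π x n m _

theorem expect_Q (k : ℕ) (J : X → ℝ≥0∞) :
    S.expect π x k (fun z => S.Q J z (π k z)) = S.stageCost π x k + S.expect π x (k + 1) J := by
  have hQ : (fun z => S.Q J z (π k z)) = (fun z => ∑' w, S.P z (π k z) w * S.g z (π k z) w)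
      + fun z => ∑' w, S.P z (π k z) w * J (S.f z (π k z) w) := by
    ext z
    simp only [Q, Pi.add_apply, mul_add, ENNReal.tsum_add]
  rw [hQ, expect_add, expect_succ, stageCost]

end Expectation

theorem bellman_mono {J J' : X → ℝ≥0∞} (h : J ≤ J') : S.bellman J ≤ S.bellman J' := fun x =>
  iInf₂_mono fun u _ => ENNReal.tsum_le_tsum fun w => by gcongr; exact h _

theorem bellman_le_Q {π : ℕ → X → U} (hπ : S.IsPolicy π) (J : X → ℝ≥0∞) (k : ℕ) (x : X) :
    S.bellman J x ≤ S.Q J x (π k x) :=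
  iInf₂_le _ (hπ k x)

theorem Jstar_le_Jcost {π : ℕ → X → U} (hπ : S.IsPolicy π) (x : X) : S.Jstar x ≤ S.Jcost π x :=
  iInf₂_le π hπ

theorem exists_isPolicy_Q_le_add {J : X → ℝ≥0∞} (hJ : S.bellman J ≤ J) {δ : ℕ → ℝ≥0∞}
    (hδ : ∀ k, δ k ≠ 0) : ∃ π, S.IsPolicy π ∧ ∀ k z, S.Q J z (π k z) ≤ J z + δ k := by
  have h : ∀ k z, ∃ u ∈ S.Uc z, S.Q J z u ≤ J z + δ k := by
    intro k z
    by_cases hz : J z = ⊤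
    · obtain ⟨u, hu⟩ := S.Uc_nonempty z
      exact ⟨u, hu, by simp [hz]⟩
    · have hlt : S.bellman J z < J z + δ k := (hJ z).trans_lt (ENNReal.lt_add_right hz (hδ k))
      simp only [bellman, iInf_lt_iff] at hlt
      obtain ⟨u, hu, hQ⟩ := hlt
      exact ⟨u, hu, hQ.le⟩
  choose π hπ hQ using h
  exact ⟨π, hπ, hQ⟩

theorem Jstar_le_of_bellman_le {J : X → ℝ≥0∞} (hJ : S.bellman J ≤ J) : S.Jstar ≤ J := by
  intro x
  refine ENNReal.le_of_forall_pos_le_add fun ε hε _ => ?_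
  obtain ⟨δ, hδ, hδε⟩ := ENNReal.exists_pos_sum_of_countable' (ENNReal.coe_ne_zero.2 hε.ne') ℕ
  obtain ⟨π, hπ, hQ⟩ := S.exists_isPolicy_Q_le_add hJ fun k => (hδ k).ne'
  have hstep : ∀ k, S.stageCost π x k + S.expect π x (k + 1) J ≤ S.expect π x k J + δ k := by
    intro k
    rw [← expect_Q, ← expect_const S π x k (δ k), ← expect_add]
    exact S.expect_mono π x k fun z => hQ k z
  refine (S.Jstar_le_Jcost hπ x).trans (ENNReal.tsum_le_of_sum_range_le fun n => ?_)
  calc ∑ k ∈ Finset.range n, S.stageCost π x k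
      ≤ ∑ k ∈ Finset.range n, S.stageCost π x k + S.expect π x n J := le_self_add
    _ ≤ S.expect π x 0 J + ∑ k ∈ Finset.range n, δ k :=
        sum_range_add_le_add_sum_of_add_le (a := fun k => S.expect π x k J) hstep n
    _ ≤ J x + ε := by
      rw [expect_zero]
      exact add_le_add le_rfl ((ENNReal.sum_le_tsum _).trans hδε.le)

theorem expect_Jstar_le_tsum {π : ℕ → X → U} (hπ : S.IsPolicy π) (x : X) (n : ℕ) :
    S.expect π x n S.Jstar ≤ ∑' m, S.stageCost π x (m + n) := calc
  S.expect π x n S.Jstar ≤ S.expect π x n fun z => ∑' m, S.stageCost (tail π n) z m :=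
      S.expect_mono π x n fun z => S.Jstar_le_Jcost (hπ.tail n) z
  _ = ∑' m, S.stageCost π x (m + n) := by simp only [expect_tsum, add_comm _ n, stageCost_add]

theorem tendsto_expect_Jstar {π : ℕ → X → U} (hπ : S.IsPolicy π) (x : X)
    (h : S.Jcost π x ≠ ⊤) : Tendsto (fun n => S.expect π x n S.Jstar) atTop (nhds 0) :=
  tendsto_of_tendsto_of_tendsto_of_le_of_le tendsto_const_nhds (ENNReal.tendsto_sum_nat_add _ h)
    (fun _ => zero_le) (S.expect_Jstar_le_tsum hπ x)

theorem bellman_Jstar_le : S.bellman S.Jstar ≤ S.Jstar := fun x =>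
  le_iInf₂ fun π hπ => calc
    S.bellman S.Jstar x ≤ S.Q S.Jstar x (π 0 x) := S.bellman_le_Q hπ _ 0 x
    _ = S.stageCost π x 0 + S.expect π x 1 S.Jstar := by rw [← expect_Q, expect_zero]
    _ ≤ S.stageCost π x 0 + ∑' m, S.stageCost π x (m + 1) :=
      add_le_add le_rfl (S.expect_Jstar_le_tsum hπ x 1)
    _ = S.Jcost π x := (tsum_eq_zero_add' ENNReal.summable).symm

theorem bellman_Jstar : S.bellman S.Jstar = S.Jstar :=
  le_antisymm S.bellman_Jstar_le (S.Jstar_le_of_bellman_le (S.bellman_mono S.bellman_Jstar_le))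

variable {S} {Jseq : ℕ → X → ℝ≥0∞}

theorem Jstar_le_iterate (hrec : ∀ k x, Jseq (k + 1) x = S.bellman (Jseq k) x)
    (h0 : S.Jstar ≤ Jseq 0) (k : ℕ) : S.Jstar ≤ Jseq k := by
  induction k with
  | zero => exact h0
  | succ k ih => exact fun x => hrec k x ▸ (S.bellman_Jstar.ge.trans (S.bellman_mono ih)) x

theorem iterate_le_sum_add_expect (hrec : ∀ k x, Jseq (k + 1) x = S.bellman (Jseq k) x)
    {π : ℕ → X → U} (hπ : S.IsPolicy π) (x : X) (n : ℕ) :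
    Jseq n x ≤ ∑ k ∈ Finset.range n, S.stageCost π x k + S.expect π x n (Jseq 0) := by
  have h := le_sum_range_add_of_le_add (a := fun k => S.expect π x k (Jseq (n - k)))
    (c := S.stageCost π x) (n := n) fun k hk => ?_
  · simpa only [expect_zero, Nat.sub_zero, Nat.sub_self] using h
  · have hn : n - k = n - (k + 1) + 1 := by omega
    calc S.expect π x k (Jseq (n - k))
        ≤ S.expect π x k fun z => S.Q (Jseq (n - (k + 1))) z (π k z) :=
          S.expect_mono π x k fun z => hn ▸ hrec _ z ▸ S.bellman_le_Q hπ _ k z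
      _ = _ := S.expect_Q π x k _

theorem limsup_iterate_le_Jstar (hrec : ∀ k x, Jseq (k + 1) x = S.bellman (Jseq k) x)
    {c : ℝ≥0} (h0 : ∀ x, Jseq 0 x ≤ c * S.Jstar x) (x : X) :
    limsup (fun n => Jseq n x) atTop ≤ S.Jstar x := by
  refine le_iInf₂ fun π hπ => ?_
  by_cases hfin : S.Jcost π x = ⊤
  · exact hfin ▸ le_top
  have hbound : ∀ n, Jseq n x ≤ S.Jcost π x + c * S.expect π x n S.Jstar := fun n => calc
    Jseq n x ≤ ∑ k ∈ Finset.range n, S.stageCost π x k + S.expect π x n (Jseq 0) :=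
        iterate_le_sum_add_expect hrec hπ x n
    _ ≤ S.Jcost π x + S.expect π x n ((c : ℝ≥0∞) • S.Jstar) :=
        add_le_add (ENNReal.sum_le_tsum _) (S.expect_mono π x n h0)
    _ = S.Jcost π x + c * S.expect π x n S.Jstar := by rw [expect_const_mul]
  have hlim : Tendsto (fun n => S.Jcost π x + c * S.expect π x n S.Jstar) atTop
      (nhds (S.Jcost π x)) := by
    simpa using tendsto_const_nhds.add
      (ENNReal.Tendsto.const_mul (S.tendsto_expect_Jstar hπ x hfin) (Or.inr ENNReal.coe_ne_top))
  exact (limsup_le_limsup (Eventually.of_forall hbound)).trans hlim.limsup_eq.le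

theorem tendsto_iterate_Jstar (hrec : ∀ k x, Jseq (k + 1) x = S.bellman (Jseq k) x) {c : ℝ≥0}
    (hlow : S.Jstar ≤ Jseq 0) (hup : ∀ x, Jseq 0 x ≤ c * S.Jstar x) (x : X) :
    Tendsto (fun n => Jseq n x) atTop (nhds (S.Jstar x)) :=
  tendsto_of_le_liminf_of_limsup_le
    (le_liminf_of_le (h := Eventually.of_forall fun n => Jstar_le_iterate hrec hlow n x))
    (limsup_iterate_le_Jstar hrec hup x)

theorem eq_Jstar_of_bellman_eq {J : X → ℝ≥0∞} (hJ : S.bellman J = J) {c : ℝ≥0}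
    (hc : ∀ x, J x ≤ c * S.Jstar x) : J = S.Jstar :=
  le_antisymm
    (fun x => by simpa using limsup_iterate_le_Jstar (Jseq := fun _ => J) (by simp [hJ]) hc x)
    (S.Jstar_le_of_bellman_le hJ.le)

end SSP

/-- `J*` is the unique solution of Bellman's equation within
`{J | 0 ≤ J ≤ c·J* for some c > 0}`, and value iteration started from any
`J₀ ∈ W* = {J | J* ≤ J ≤ c·J* for some c > 0}` converges pointwise to `J*`. -/
theorem Jstar_unique_and_VI {X U W : Type*} [Countable W] (S : SSP X U W) :
    ((∀ x, S.Jstar x = S.bellman S.Jstar x) ∧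
      ∀ J : X → ℝ≥0∞, (∃ c : ℝ≥0, 0 < c ∧ ∀ x, J x ≤ (c : ℝ≥0∞) * S.Jstar x) →
        (∀ x, J x = S.bellman J x) → J = S.Jstar) ∧
    (∀ Jseq : ℕ → X → ℝ≥0∞,
      (∃ c : ℝ≥0, 0 < c ∧
        ∀ x, S.Jstar x ≤ Jseq 0 x ∧ Jseq 0 x ≤ (c : ℝ≥0∞) * S.Jstar x) →
      (∀ k x, Jseq (k + 1) x = S.bellman (Jseq k) x) →
      ∀ x, Tendsto (fun k => Jseq k x) atTop (nhds (S.Jstar x))) :=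
  ⟨⟨fun x => congrFun S.bellman_Jstar.symm x,
    fun _ ⟨_, _, hc⟩ hJ => S.eq_Jstar_of_bellman_eq (funext fun x => (hJ x).symm) hc⟩,
    fun _ ⟨_, _, h0⟩ hrec =>
      SSP.tendsto_iterate_Jstar hrec (fun x => (h0 x).1) (fun x => (h0 x).2)⟩
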